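/- There exists a trivariate random vector (X₁, X₂, X₃) — explicitly: X₃ uniform on [0,4]; given X₃ = x, (X₁, X₂) = (Φ(Z₁), Φ(Z₂)) where Φ is the standard normal c.d.f. and (Z₁, Z₂) is a centered bivariate Gaussian vector with unit variances and correlation ρ(x), with ρ(x) = 1/2 for x ∈ [0,1] ∪ (2,3] and ρ(x) = −1/2 for x ∈ (1,2] ∪ (3,4] — such that: (i) the conditional law of (X₁, X₂) given X₃ ∈ [0,2] equals the conditional law of (X₁, X₂) given X₃ ∈ (2,4] (both being the equal-weight mixture of the Gaussian copulas with correlations 1/2 and −1/2), so in particular τ_{1,2|X₃∈[0,2]} = τ_{1,2|X₃∈(2,4]}; and (ii) the map x ↦ τ_{1,2|X₃=x} is not constant, since τ_{1,2|X₃=x} > 0 for x ∈ [0,1] while τ_{1,2|X₃=x} < 0 for x ∈ (1,2]. Hence constancy of the subset-conditional Kendall's tau over the partition {[0,2], (2,4]} does not imply constancy of the pointwise conditional Kendall's tau. -/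

import Mathlib

/- Common framework: conditional Kendall's tau given discretized conditioning events.

An observation is a pair `(x_I, x_J) : (Fin p → ℝ) × (Fin dJ → ℝ)`, where `x_I` is the
conditioned vector and `x_J` the conditioning vector. -/

open MeasureTheory ProbabilityTheory Filter Finset
open scoped Topology Classical

noncomputable section

/-- The space of one observation `X = (X_I, X_J)`. -/
abbrev RVec (p dJ : ℕ) : Type := (Fin p → ℝ) × (Fin dJ → ℝ)

namespace CondKT

variable {p dJ : ℕ}

/-- The symmetrized concordance kernel `π_{a,b}(x,y)`. -/
def kerPi (a b : Fin p) (x y : RVec p dJ) : ℝ :=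
  ((if x.1 a < y.1 a ∧ x.1 b < y.1 b then (1 : ℝ) else 0) +
    (if y.1 a < x.1 a ∧ y.1 b < x.1 b then (1 : ℝ) else 0)) / 2

/-- `p_k = P(X_J ∈ A)`, where `ν` is the law of `X`. -/
def pA (ν : Measure (RVec p dJ)) (A : Set (Fin dJ → ℝ)) : ℝ :=
  (ν {x | x.2 ∈ A}).toReal

/-- `D_{a,b,k} = P(X_{1,a} < X_{2,a}, X_{1,b} < X_{2,b}, X_{1,J} ∈ A, X_{2,J} ∈ A)`
for two independent copies `X_1, X_2` with law `ν`. -/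
def Dab (ν : Measure (RVec p dJ)) (a b : Fin p) (A : Set (Fin dJ → ℝ)) : ℝ :=
  ((ν.prod ν) {q | q.1.1 a < q.2.1 a ∧ q.1.1 b < q.2.1 b ∧ q.1.2 ∈ A ∧ q.2.2 ∈ A}).toReal

/-- `P_k`: the conditional law of `X` given `X_J ∈ A`. -/
def PA (ν : Measure (RVec p dJ)) (A : Set (Fin dJ → ℝ)) : Measure (RVec p dJ) :=
  ν[|{x | x.2 ∈ A}]

/-- `I_{a,b,a',b',k,l} = ∫ 1{z_J ∈ A_k ∩ A_l} π_{a,b}(x,z) π_{a',b'}(y,z) P_k(dx) P_l(dy) P(dz)`. -/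
def Iq (ν : Measure (RVec p dJ)) (a b a' b' : Fin p) (Ak Al : Set (Fin dJ → ℝ)) : ℝ :=
  ∫ x, ∫ y, ∫ z, (if z.2 ∈ Ak ∩ Al then (1 : ℝ) else 0) * kerPi a b x z * kerPi a' b' y z
    ∂ν ∂(PA ν Al) ∂(PA ν Ak)

/-- `J_{a,b,k,l} = ∫ 1{y_J ∈ A_k ∩ A_l} π_{a,b}(x,y) P_k(dx) P(dy)`. -/
def Jq (ν : Measure (RVec p dJ)) (a b : Fin p) (Ak Al : Set (Fin dJ → ℝ)) : ℝ :=
  ∫ x, ∫ y, (if y.2 ∈ Ak ∩ Al then (1 : ℝ) else 0) * kerPi a b x y ∂ν ∂(PA ν Ak)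

/-- `p_{k,l} = P(X_J ∈ A_k ∩ A_l)`. -/
def pAA (ν : Measure (RVec p dJ)) (Ak Al : Set (Fin dJ → ℝ)) : ℝ :=
  (ν {x | x.2 ∈ Ak ∧ x.2 ∈ Al}).toReal

/-- The conditional Kendall's tau `τ_{a,b | X_J ∈ A}`:
`P((X_{1,a}-X_{2,a})(X_{1,b}-X_{2,b}) > 0 | X_{1,J} ∈ A, X_{2,J} ∈ A)
  - P((X_{1,a}-X_{2,a})(X_{1,b}-X_{2,b}) < 0 | X_{1,J} ∈ A, X_{2,J} ∈ A)`. -/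
def condTau (ν : Measure (RVec p dJ)) (a b : Fin p) (A : Set (Fin dJ → ℝ)) : ℝ :=
  (((ν.prod ν)[|{q : RVec p dJ × RVec p dJ | q.1.2 ∈ A ∧ q.2.2 ∈ A}])
      {q : RVec p dJ × RVec p dJ | 0 < (q.1.1 a - q.2.1 a) * (q.1.1 b - q.2.1 b)}).toReal -
    (((ν.prod ν)[|{q : RVec p dJ × RVec p dJ | q.1.2 ∈ A ∧ q.2.2 ∈ A}])
      {q : RVec p dJ × RVec p dJ | (q.1.1 a - q.2.1 a) * (q.1.1 b - q.2.1 b) < 0}).toReal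

/-- The conditional distribution of the coordinate `X_a` given `X_J ∈ A` is continuous
(i.e. has no atoms). -/
def CondMarginContinuous (ν : Measure (RVec p dJ)) (a : Fin p) (A : Set (Fin dJ → ℝ)) : Prop :=
  ∀ t : ℝ, PA ν A {x | x.1 a = t} = 0

variable {Ω : Type*} [MeasurableSpace Ω]

/-- `N_{k,n}`: the number of sample points (among `X 0, …, X (n-1)`) falling in the
conditioning event `A`. -/
def NA (X : ℕ → Ω → RVec p dJ) (A : Set (Fin dJ → ℝ)) (n : ℕ) (ω : Ω) : ℝ :=
  ∑ i ∈ Finset.range n, if (X i ω).2 ∈ A then (1 : ℝ) else 0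

/-- The weights `w^{(k)}_{i,n} = 1{X_{i,J} ∈ A} / N_{k,n}`. -/
def wA (X : ℕ → Ω → RVec p dJ) (A : Set (Fin dJ → ℝ)) (n i : ℕ) (ω : Ω) : ℝ :=
  (if (X i ω).2 ∈ A then (1 : ℝ) else 0) / NA X A n ω

/-- `s^{(k)}_n = Σ_i (w^{(k)}_{i,n})²`. -/
def sA (X : ℕ → Ω → RVec p dJ) (A : Set (Fin dJ → ℝ)) (n : ℕ) (ω : Ω) : ℝ :=
  ∑ i ∈ Finset.range n, (wA X A n i ω) ^ 2

/-- The estimator `τ̂^{(1)}`. -/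
def tauHat1 (X : ℕ → Ω → RVec p dJ) (a b : Fin p) (A : Set (Fin dJ → ℝ)) (n : ℕ) (ω : Ω) : ℝ :=
  4 * ∑ i ∈ Finset.range n, ∑ j ∈ Finset.range n, wA X A n i ω * wA X A n j ω *
      (if (X i ω).1 a < (X j ω).1 a ∧ (X i ω).1 b < (X j ω).1 b then (1 : ℝ) else 0) - 1

/-- The estimator `τ̂^{(2)}`. -/
def tauHat2 (X : ℕ → Ω → RVec p dJ) (a b : Fin p) (A : Set (Fin dJ → ℝ)) (n : ℕ) (ω : Ω) : ℝ :=
  ∑ i ∈ Finset.range n, ∑ j ∈ Finset.range n, wA X A n i ω * wA X A n j ω *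
      ((if 0 < ((X i ω).1 a - (X j ω).1 a) * ((X i ω).1 b - (X j ω).1 b) then (1 : ℝ) else 0) -
        (if ((X i ω).1 a - (X j ω).1 a) * ((X i ω).1 b - (X j ω).1 b) < 0 then (1 : ℝ) else 0))

/-- The estimator `τ̂^{(3)}`. -/
def tauHat3 (X : ℕ → Ω → RVec p dJ) (a b : Fin p) (A : Set (Fin dJ → ℝ)) (n : ℕ) (ω : Ω) : ℝ :=
  1 - 4 * ∑ i ∈ Finset.range n, ∑ j ∈ Finset.range n, wA X A n i ω * wA X A n j ω *
      (if (X i ω).1 a < (X j ω).1 a ∧ (X j ω).1 b < (X i ω).1 b then (1 : ℝ) else 0)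

/-- The rescaled estimator `τ̂ = τ̂^{(2)} / (1 - s^{(k)}_n)` of the conditional Kendall's tau. -/
def tauHat (X : ℕ → Ω → RVec p dJ) (a b : Fin p) (A : Set (Fin dJ → ℝ)) (n : ℕ) (ω : Ω) : ℝ :=
  tauHat2 X a b A n ω / (1 - sA X A n ω)

/-- The U-statistic `D̂_{a,b,k}`. -/
def DHat (X : ℕ → Ω → RVec p dJ) (a b : Fin p) (A : Set (Fin dJ → ℝ)) (n : ℕ) (ω : Ω) : ℝ :=
  (∑ i ∈ Finset.range n, ∑ j ∈ Finset.range n,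
      if i ≠ j ∧ (X i ω).1 a < (X j ω).1 a ∧ (X i ω).1 b < (X j ω).1 b ∧
          (X i ω).2 ∈ A ∧ (X j ω).2 ∈ A then (1 : ℝ) else 0) /
    ((n : ℝ) * ((n : ℝ) - 1))

/-- The empirical probability `p̂_k`. -/
def pHat (X : ℕ → Ω → RVec p dJ) (A : Set (Fin dJ → ℝ)) (n : ℕ) (ω : Ω) : ℝ :=
  (∑ i ∈ Finset.range n, if (X i ω).2 ∈ A then (1 : ℝ) else 0) / n

/-- `μ` is the centered Gaussian distribution on `ι → ℝ` with covariance matrix `S`,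
characterized through its one-dimensional projections (Cramér–Wold). -/
def IsCenteredGaussianLaw {ι : Type*} [Fintype ι] (μ : Measure (ι → ℝ))
    (S : Matrix ι ι ℝ) : Prop :=
  IsProbabilityMeasure μ ∧
    ∀ a : ι → ℝ, μ.map (fun x => ∑ i, a i * x i) =
      gaussianReal 0 (∑ i, ∑ j, a i * S i j * a j).toNNReal

/-- Convergence in distribution of the random elements `Z n` towards the law `μ`. -/
def TendstoInDistrib {E : Type*} [MeasurableSpace E] [TopologicalSpace E]
    (P : Measure Ω) (Z : ℕ → Ω → E) (μ : Measure E) : Prop :=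
  ∀ f : BoundedContinuousFunction E ℝ,
    Tendsto (fun n => ∫ ω, f (Z n ω) ∂P) atTop (𝓝 (∫ x, f x ∂μ))

/-- The chi-squared distribution with `k` degrees of freedom. -/
def chiSquared (k : ℝ) : Measure ℝ := gammaMeasure (k / 2) (1 / 2)

/-- The `(m-1) × m` contrast matrix `T = [1_{m-1} : -I_{m-1}]`. -/
def contrastT (m : ℕ) : Matrix (Fin (m - 1)) (Fin m) ℝ := fun i j =>
  if (j : ℕ) = 0 then 1 else if (j : ℕ) = (i : ℕ) + 1 then -1 else 0

/-- The index set of pairs `(a,b)` with `a < b` in `Fin p`. -/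
abbrev PairIdx (p : ℕ) : Type := {q : Fin p × Fin p // q.1 < q.2}

end CondKT

namespace CondKT

/-- Kendall's tau of a bivariate distribution `μ`. -/
def ktau2 (μ : Measure (ℝ × ℝ)) : ℝ :=
  ((μ.prod μ) {q : (ℝ × ℝ) × (ℝ × ℝ) | 0 < (q.1.1 - q.2.1) * (q.1.2 - q.2.2)}).toReal -
    ((μ.prod μ) {q : (ℝ × ℝ) × (ℝ × ℝ) | (q.1.1 - q.2.1) * (q.1.2 - q.2.2) < 0}).toReal

/-- The subset-conditional Kendall's tau `τ_{1,2|X₃ ∈ A}` of a trivariate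
distribution `μ` (the law of `(X₁, X₂, X₃)`). -/
def sCKT (μ : Measure (ℝ × ℝ × ℝ)) (A : Set ℝ) : ℝ :=
  (((μ.prod μ)[|{q : (ℝ × ℝ × ℝ) × (ℝ × ℝ × ℝ) | q.1.2.2 ∈ A ∧ q.2.2.2 ∈ A}])
      {q : (ℝ × ℝ × ℝ) × (ℝ × ℝ × ℝ) | 0 < (q.1.1 - q.2.1) * (q.1.2.1 - q.2.2.1)}).toReal -
    (((μ.prod μ)[|{q : (ℝ × ℝ × ℝ) × (ℝ × ℝ × ℝ) | q.1.2.2 ∈ A ∧ q.2.2.2 ∈ A}])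
      {q : (ℝ × ℝ × ℝ) × (ℝ × ℝ × ℝ) | (q.1.1 - q.2.1) * (q.1.2.1 - q.2.2.1) < 0}).toReal

/-- The uniform distribution on `[a, b]`. -/
def unif (a b : ℝ) : Measure ℝ := (volume : Measure ℝ)[|Set.Icc a b]

end CondKT

open CondKT

namespace CondKT

/-- The standard normal cumulative distribution function `Φ`. -/
def stdNormalCDF : ℝ → ℝ := fun t => ProbabilityTheory.cdf (gaussianReal 0 1) t

/-- A centered bivariate Gaussian distribution with unit variances and correlation `ρ`. -/
def biGauss (ρ : ℝ) : Measure (ℝ × ℝ) :=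
  ((gaussianReal 0 1).prod (gaussianReal 0 1)).map
    (fun z => (z.1, ρ * z.1 + Real.sqrt (1 - ρ ^ 2) * z.2))

/-- The bivariate Gaussian copula with correlation `ρ`, i.e. the law of `(Φ(Z₁), Φ(Z₂))`
for `(Z₁, Z₂)` centered Gaussian with unit variances and correlation `ρ`. -/
def gaussCopula (ρ : ℝ) : Measure (ℝ × ℝ) :=
  (biGauss ρ).map (fun z => (stdNormalCDF z.1, stdNormalCDF z.2))

end CondKT

open CondKT

/-!
Conditioning on `X₃ ∈ [0, 2]` or on `X₃ ∈ (2, 4]` averages the Gaussian copulas with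
correlations `1/2` and `-1/2` over two sets of equal length, so both conditional laws of
`(X₁, X₂)` are the same equal-weight mixture, and the subset-conditional Kendall's tau only
depends on that law.

Pointwise, Kendall's tau is unchanged by the increasing map `Φ` and changes sign when `Z₂` is
replaced by `-Z₂`, which turns correlation `ρ` into `-ρ`. Writing `Z₂ = ρ Z₁ + √(1 - ρ²) W`,
the concordance of two independent draws is `D (ρ D + √(1 - ρ²) E)` with `D, E` the differences
of the `Z₁` and `W` coordinates; it increases with `ρ`, strictly on an open set, so
`τ(-ρ) < τ(ρ) = -τ(-ρ)` and `τ(ρ) > 0` for `ρ > 0`.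
-/

namespace CondKT

section SignGap

variable {X : Type*} [MeasurableSpace X]

def signGap (m : Measure X) (f : X → ℝ) : ℝ :=
  m.real {x | 0 < f x} - m.real {x | f x < 0}

lemma signGap_neg (m : Measure X) (f : X → ℝ) : signGap m (-f) = -signGap m f := by
  simp only [signGap, Pi.neg_apply, neg_pos, neg_lt_zero]
  ring

lemma signGap_congr (m : Measure X) {f g : X → ℝ} (hpos : ∀ x, 0 < f x ↔ 0 < g x)
    (hneg : ∀ x, f x < 0 ↔ g x < 0) : signGap m f = signGap m g := by
  simp only [signGap, hpos, hneg]

lemma signGap_map {Y : Type*} [MeasurableSpace Y] {m : Measure Y} {φ : Y → X}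
    (hφ : Measurable φ) {f : X → ℝ} (hf : Measurable f) :
    signGap (m.map φ) f = signGap m (f ∘ φ) := by
  rw [signGap, map_measureReal_apply hφ (measurableSet_lt measurable_const hf),
    map_measureReal_apply hφ (measurableSet_lt hf measurable_const)]
  rfl

lemma signGap_lt_signGap [TopologicalSpace X] [OpensMeasurableSpace X] (m : Measure X)
    [IsFiniteMeasure m] [m.IsOpenPosMeasure] {f g : X → ℝ} (hf : Continuous f)
    (hg : Continuous g) (hgf : g ≤ f) {x₀ : X} (hg₀ : g x₀ < 0) (hf₀ : 0 < f x₀) :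
    signGap m g < signGap m f := by
  set U := {x | g x < 0} ∩ {x | 0 < f x}
  have hU : IsOpen U := (isOpen_lt hg continuous_const).inter (isOpen_lt continuous_const hf)
  have hUpos : 0 < m.real U :=
    ENNReal.toReal_pos (hU.measure_ne_zero m ⟨x₀, hg₀, hf₀⟩) (measure_ne_top m U)
  have hdisj : Disjoint {x | 0 < g x} U :=
    Set.disjoint_left.2 fun x (hx : 0 < g x) (hxU : x ∈ U) => lt_asymm hx hxU.1
  have hpos : m.real {x | 0 < g x} + m.real U ≤ m.real {x | 0 < f x} := by
    rw [← measureReal_union hdisj hU.measurableSet]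
    exact measureReal_mono (Set.union_subset (fun x hx => hx.trans_le (hgf x)) fun x hx => hx.2)
  have hneg : m.real {x | f x < 0} ≤ m.real {x | g x < 0} :=
    measureReal_mono fun x hx => (hgf x).trans_lt hx
  simp only [signGap]
  linarith

end SignGap

section KendallTau

def concordance (q : (ℝ × ℝ) × (ℝ × ℝ)) : ℝ := (q.1.1 - q.2.1) * (q.1.2 - q.2.2)

lemma continuous_concordance : Continuous concordance := by
  unfold concordance
  fun_prop

lemma ktau2_eq_signGap (μ : Measure (ℝ × ℝ)) : ktau2 μ = signGap (μ.prod μ) concordance := rfl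

lemma ktau2_map {α : Type*} [MeasurableSpace α] {μ : Measure α} [SFinite μ] {φ : α → ℝ × ℝ}
    (hφ : Measurable φ) : ktau2 (μ.map φ) = signGap (μ.prod μ) (concordance ∘ Prod.map φ φ) := by
  rw [ktau2_eq_signGap, Measure.map_prod_map _ _ hφ hφ,
    signGap_map (hφ.prodMap hφ) continuous_concordance.measurable]

lemma ktau2_map_prodMap_of_strictMono {μ : Measure (ℝ × ℝ)} [SFinite μ] {f g : ℝ → ℝ}
    (hf : StrictMono f) (hg : StrictMono g) : ktau2 (μ.map (Prod.map f g)) = ktau2 μ := by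
  rw [ktau2_map (hf.monotone.measurable.prodMap hg.monotone.measurable), ktau2_eq_signGap]
  apply signGap_congr <;>
    simp [concordance, mul_pos_iff, mul_neg_iff, sub_pos, sub_neg, hf.lt_iff_lt, hg.lt_iff_lt]

lemma ktau2_map_neg_snd {μ : Measure (ℝ × ℝ)} [SFinite μ] :
    ktau2 (μ.map (Prod.map id Neg.neg)) = -ktau2 μ := by
  rw [ktau2_map (by fun_prop), ktau2_eq_signGap, ← signGap_neg]
  congr 1
  funext q
  simp only [concordance, Function.comp_apply, Prod.map, id, Pi.neg_apply]
  ring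

lemma cond_prod_prod {α β : Type*} [MeasurableSpace α] [MeasurableSpace β] (μ : Measure α)
    (ν : Measure β) [IsFiniteMeasure μ] [IsFiniteMeasure ν] (s : Set α) (t : Set β) :
    (μ.prod ν)[|s ×ˢ t] = μ[|s].prod ν[|t] := by
  simp only [ProbabilityTheory.cond]
  rw [Measure.prod_prod, ← Measure.prod_restrict, Measure.prod_smul_left, Measure.prod_smul_right,
    smul_smul, ENNReal.mul_inv (by simp) (by simp), mul_comm]

lemma sCKT_eq_ktau2_cond (μ : Measure (ℝ × ℝ × ℝ)) [IsFiniteMeasure μ] (A : Set ℝ) :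
    sCKT μ A = ktau2 ((μ[|{z | z.2.2 ∈ A}]).map fun z => (z.1, z.2.1)) := by
  rw [ktau2_map (by fun_prop), ← cond_prod_prod]
  rfl

end KendallTau

section Gaussian

lemma isOpenPosMeasure_gaussianReal (m : ℝ) {v : NNReal} (hv : v ≠ 0) :
    (gaussianReal m v).IsOpenPosMeasure :=
  (gaussianReal_absolutelyContinuous' m hv).isOpenPosMeasure

instance : (gaussianReal 0 1).IsOpenPosMeasure := isOpenPosMeasure_gaussianReal 0 one_ne_zero

lemma strictMono_stdNormalCDF : StrictMono stdNormalCDF := by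
  intro a b hab
  have h : 0 < gaussianReal 0 1 (Set.Ioc a b) :=
    ((Measure.measure_Ioo_pos _).2 hab).trans_le (measure_mono Set.Ioo_subset_Ioc_self)
  rwa [← measure_cdf (gaussianReal 0 1), StieltjesFunction.measure_Ioc, ENNReal.ofReal_pos,
    sub_pos] at h

instance (ρ : ℝ) : IsProbabilityMeasure (biGauss ρ) :=
  Measure.isProbabilityMeasure_map (by fun_prop)

instance (ρ : ℝ) : IsProbabilityMeasure (gaussCopula ρ) :=
  Measure.isProbabilityMeasure_map
    (strictMono_stdNormalCDF.monotone.measurable.prodMap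
      strictMono_stdNormalCDF.monotone.measurable).aemeasurable

lemma map_neg_snd_gaussianReal_prod :
    ((gaussianReal 0 1).prod (gaussianReal 0 1)).map (Prod.map id Neg.neg) =
      (gaussianReal 0 1).prod (gaussianReal 0 1) := by
  rw [← Measure.map_prod_map _ _ measurable_id measurable_neg, Measure.map_id]
  congr
  simpa using gaussianReal_map_neg (μ := 0) (v := 1)

lemma biGauss_neg (ρ : ℝ) : biGauss (-ρ) = (biGauss ρ).map (Prod.map id Neg.neg) := by
  rw [biGauss, biGauss, Measure.map_map (by fun_prop) (by fun_prop)]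
  conv_lhs => rw [← map_neg_snd_gaussianReal_prod]
  rw [Measure.map_map (by fun_prop) (by fun_prop)]
  congr 1
  funext z
  simp only [Function.comp_apply, Prod.map, id, neg_sq]
  ring_nf

lemma ktau2_biGauss_neg (ρ : ℝ) : ktau2 (biGauss (-ρ)) = -ktau2 (biGauss ρ) := by
  rw [biGauss_neg, ktau2_map_neg_snd]

lemma ktau2_biGauss_eq_signGap (ρ : ℝ) :
    ktau2 (biGauss ρ) = signGap (((gaussianReal 0 1).prod (gaussianReal 0 1)).prod
      ((gaussianReal 0 1).prod (gaussianReal 0 1)))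
      (fun q => (q.1.1 - q.2.1) * (ρ * (q.1.1 - q.2.1) + √(1 - ρ ^ 2) * (q.1.2 - q.2.2))) := by
  rw [biGauss, ktau2_map (by fun_prop)]
  congr 1
  funext q
  simp only [concordance, Function.comp_apply, Prod.map]
  ring

lemma ktau2_biGauss_pos {ρ : ℝ} (hρ : 0 < ρ) : 0 < ktau2 (biGauss ρ) := by
  have hlt : ktau2 (biGauss (-ρ)) < ktau2 (biGauss ρ) := by
    rw [ktau2_biGauss_eq_signGap, ktau2_biGauss_eq_signGap, neg_sq]
    refine signGap_lt_signGap _ (by fun_prop) (by fun_prop) (fun q => ?_)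
      (x₀ := ((1, 0), (0, 0))) (by simpa using hρ) (by simpa using hρ)
    nlinarith [sq_nonneg (q.1.1 - q.2.1)]
  rw [ktau2_biGauss_neg] at hlt
  linarith

lemma ktau2_gaussCopula (ρ : ℝ) : ktau2 (gaussCopula ρ) = ktau2 (biGauss ρ) :=
  ktau2_map_prodMap_of_strictMono strictMono_stdNormalCDF strictMono_stdNormalCDF

lemma ktau2_gaussCopula_pos {ρ : ℝ} (hρ : 0 < ρ) : 0 < ktau2 (gaussCopula ρ) :=
  ktau2_gaussCopula ρ ▸ ktau2_biGauss_pos hρ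

lemma ktau2_gaussCopula_neg {ρ : ℝ} (hρ : ρ < 0) : ktau2 (gaussCopula ρ) < 0 := by
  rw [ktau2_gaussCopula, ← neg_neg ρ, ktau2_biGauss_neg, neg_lt_zero]
  exact ktau2_biGauss_pos (neg_pos.2 hρ)

end Gaussian

section CondKernel

variable {α β γ : Type*} [MeasurableSpace α] [MeasurableSpace β] [MeasurableSpace γ]

def HasCondKernel (μ : Measure (α × β × γ)) (ν : Measure γ) (κ : Kernel γ (α × β)) : Prop :=
  ∀ (B : Set (α × β)) (C : Set γ), MeasurableSet B → MeasurableSet C →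
    μ {z | (z.1, z.2.1) ∈ B ∧ z.2.2 ∈ C} = ∫⁻ x in C, κ x B ∂ν

namespace HasCondKernel

variable {μ : Measure (α × β × γ)} {ν : Measure γ} {κ : Kernel γ (α × β)}

lemma measure_snd_snd_mem [IsMarkovKernel κ] (h : HasCondKernel μ ν κ) {C : Set γ}
    (hC : MeasurableSet C) : μ {z | z.2.2 ∈ C} = ν C := by
  simpa using h Set.univ C MeasurableSet.univ hC

lemma map_snd_snd [IsMarkovKernel κ] (h : HasCondKernel μ ν κ) :
    μ.map (fun z => z.2.2) = ν := by
  ext C hC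
  rw [Measure.map_apply (by fun_prop) hC]
  exact h.measure_snd_snd_mem hC

lemma cond_map_apply [IsMarkovKernel κ] (h : HasCondKernel μ ν κ) {C : Set γ}
    (hC : MeasurableSet C) {B : Set (α × β)} (hB : MeasurableSet B) :
    (μ[|{z | z.2.2 ∈ C}]).map (fun z => (z.1, z.2.1)) B = (ν C)⁻¹ * ∫⁻ x in C, κ x B ∂ν := by
  have hE : MeasurableSet {z : α × β × γ | z.2.2 ∈ C} := hC.preimage (by fun_prop)
  rw [Measure.map_apply (by fun_prop) hB, cond_apply hE, h.measure_snd_snd_mem hC,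
    ← h B C hB hC, Set.inter_comm]
  rfl

lemma cond_map_eq_half_add_half [IsMarkovKernel κ] (h : HasCondKernel μ ν κ) {C₁ C₂ : Set γ}
    (hC₁ : MeasurableSet C₁) (hC₂ : MeasurableSet C₂) (hd : Disjoint C₁ C₂)
    (hν : ν C₁ = ν C₂) (hν₀ : ν C₁ ≠ 0) (hν_top : ν C₁ ≠ ⊤) {m₁ m₂ : Measure (α × β)}
    (hκ₁ : ∀ x ∈ C₁, κ x = m₁) (hκ₂ : ∀ x ∈ C₂, κ x = m₂) :
    (μ[|{z | z.2.2 ∈ C₁ ∪ C₂}]).map (fun z => (z.1, z.2.1)) =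
      (1 / 2 : ENNReal) • m₁ + (1 / 2 : ENNReal) • m₂ := by
  ext B hB
  rw [h.cond_map_apply (hC₁.union hC₂) hB, measure_union hd hC₂, lintegral_union hC₂ hd,
    setLIntegral_congr_fun hC₁ fun x hx => by rw [hκ₁ x hx],
    setLIntegral_congr_fun hC₂ fun x hx => by rw [hκ₂ x hx],
    setLIntegral_const, setLIntegral_const, ← hν]
  simp only [Measure.add_apply, Measure.smul_apply, smul_eq_mul]
  rw [← two_mul, ENNReal.mul_inv (by simp) (by simp), ← add_mul, mul_comm (m₁ B + m₂ B),
    ← mul_assoc, mul_assoc 2⁻¹, ENNReal.inv_mul_cancel hν₀ hν_top, mul_one, one_div, mul_add]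

end HasCondKernel

def jointLaw (ν : Measure γ) (κ : Kernel γ (α × β)) : Measure (α × β × γ) :=
  (ν ⊗ₘ κ).map fun q => (q.2.1, q.2.2, q.1)

instance (ν : Measure γ) [IsProbabilityMeasure ν] (κ : Kernel γ (α × β)) [IsMarkovKernel κ] :
    IsProbabilityMeasure (jointLaw ν κ) :=
  Measure.isProbabilityMeasure_map (by fun_prop)

lemma hasCondKernel_jointLaw (ν : Measure γ) [SFinite ν] (κ : Kernel γ (α × β))
    [IsSFiniteKernel κ] : HasCondKernel (jointLaw ν κ) ν κ := by
  intro B C hB hC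
  have hpre : (fun q : γ × α × β => (q.2.1, q.2.2, q.1)) ⁻¹'
      {z : α × β × γ | (z.1, z.2.1) ∈ B ∧ z.2.2 ∈ C} = C ×ˢ B := by
    ext q
    simp [and_comm]
  have hmeas : MeasurableSet {z : α × β × γ | (z.1, z.2.1) ∈ B ∧ z.2.2 ∈ C} :=
    (hB.preimage (by fun_prop)).inter (hC.preimage (by fun_prop))
  rw [jointLaw, Measure.map_apply (by fun_prop) hmeas, hpre, Measure.compProd_apply_prod hC hB]

end CondKernel

section CorrKernel

lemma isProbabilityMeasure_unif {a b : ℝ} (hab : a < b) : IsProbabilityMeasure (unif a b) :=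
  cond_isProbabilityMeasure_of_finite (by simpa using hab) (by simp)

instance : IsProbabilityMeasure (unif 0 4) := isProbabilityMeasure_unif (by norm_num)

lemma unif_apply_of_subset {a b : ℝ} {C : Set ℝ} (hC : C ⊆ Set.Icc a b) :
    unif a b C = (ENNReal.ofReal (b - a))⁻¹ * volume C := by
  rw [unif, cond_apply measurableSet_Icc, Set.inter_eq_right.2 hC, Real.volume_Icc]

def corrKernel : Kernel ℝ (ℝ × ℝ) :=
  Kernel.piecewise (measurableSet_Ioc.union measurableSet_Ioc : MeasurableSet
      (Set.Ioc (1 : ℝ) 2 ∪ Set.Ioc 3 4))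
    (Kernel.const ℝ (gaussCopula (-(1 / 2)))) (Kernel.const ℝ (gaussCopula (1 / 2)))

instance : IsMarkovKernel corrKernel := by
  unfold corrKernel
  infer_instance

lemma corrKernel_of_mem_pos {x : ℝ} (hx : x ∈ Set.Icc (0 : ℝ) 1 ∪ Set.Ioc 2 3) :
    corrKernel x = gaussCopula (1 / 2) := by
  have hx' : x ∉ Set.Ioc (1 : ℝ) 2 ∪ Set.Ioc 3 4 := by
    rintro (⟨_, _⟩ | ⟨_, _⟩) <;> rcases hx with ⟨_, _⟩ | ⟨_, _⟩ <;> linarith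
  rw [corrKernel, Kernel.piecewise_apply, if_neg hx', Kernel.const_apply]

lemma corrKernel_of_mem_neg {x : ℝ} (hx : x ∈ Set.Ioc (1 : ℝ) 2 ∪ Set.Ioc 3 4) :
    corrKernel x = gaussCopula (-(1 / 2)) := by
  rw [corrKernel, Kernel.piecewise_apply, if_pos hx, Kernel.const_apply]

lemma cond_map_jointLaw_corrKernel {C₁ C₂ : Set ℝ} (hC₁ : MeasurableSet C₁)
    (hC₂ : MeasurableSet C₂) (hd : Disjoint C₁ C₂) (h₁ : C₁ ⊆ Set.Icc 0 1 ∪ Set.Ioc 2 3)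
    (h₂ : C₂ ⊆ Set.Ioc 1 2 ∪ Set.Ioc 3 4) (hv₁ : volume C₁ = 1) (hv₂ : volume C₂ = 1) :
    ((jointLaw (unif 0 4) corrKernel)[|{z | z.2.2 ∈ C₁ ∪ C₂}]).map (fun z => (z.1, z.2.1)) =
      (1 / 2 : ENNReal) • gaussCopula (1 / 2) + (1 / 2 : ENNReal) • gaussCopula (-(1 / 2)) := by
  have hsub₁ : C₁ ⊆ Set.Icc 0 4 := h₁.trans (Set.union_subset
    (Set.Icc_subset_Icc le_rfl (by norm_num))
    (Set.Ioc_subset_Icc_self.trans (Set.Icc_subset_Icc (by norm_num) (by norm_num))))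
  have hsub₂ : C₂ ⊆ Set.Icc 0 4 := h₂.trans (Set.union_subset
    (Set.Ioc_subset_Icc_self.trans (Set.Icc_subset_Icc (by norm_num) (by norm_num)))
    (Set.Ioc_subset_Icc_self.trans (Set.Icc_subset_Icc (by norm_num) le_rfl)))
  have hν₁ : unif 0 4 C₁ = 4⁻¹ := by simp [unif_apply_of_subset hsub₁, hv₁]
  have hν₂ : unif 0 4 C₂ = 4⁻¹ := by simp [unif_apply_of_subset hsub₂, hv₂]
  exact (hasCondKernel_jointLaw _ _).cond_map_eq_half_add_half hC₁ hC₂ hd (hν₁.trans hν₂.symm)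
    (by simp [hν₁]) (by simp [hν₁]) (fun x hx => corrKernel_of_mem_pos (h₁ hx))
    (fun x hx => corrKernel_of_mem_neg (h₂ hx))

end CorrKernel

end CondKT

/-- **Second counter-example:** a trivariate random vector whose subset-conditional Kendall's
tau is constant over the partition `{[0,2], (2,4]}` (the two conditional laws of `(X₁,X₂)`
even coincide, both being the equal-weight mixture of the Gaussian copulas with correlations
`1/2` and `-1/2`), while its pointwise conditional Kendall's tau is not constant. -/
theorem stmt14 :
    ∃ (Ω : Type) (_ : MeasurableSpace Ω) (P : Measure Ω) (X : Ω → ℝ × ℝ × ℝ)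
      (κ : ProbabilityTheory.Kernel ℝ (ℝ × ℝ)),
      IsProbabilityMeasure P ∧ Measurable X ∧ IsMarkovKernel κ ∧
      -- `X₃` is uniform on `[0, 4]`
      P.map (fun ω => (X ω).2.2) = unif 0 4 ∧
      -- `κ` is a regular conditional distribution of `(X₁, X₂)` given `X₃`
      (∀ (B : Set (ℝ × ℝ)) (C : Set ℝ), MeasurableSet B → MeasurableSet C →
        (P.map X) {z : ℝ × ℝ × ℝ | (z.1, z.2.1) ∈ B ∧ z.2.2 ∈ C} =
          ∫⁻ x in C, κ x B ∂(unif 0 4)) ∧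
      -- the explicit conditional structure: Gaussian copulas with correlation `ρ(x) = ±1/2`
      (∀ x ∈ Set.Icc (0 : ℝ) 1 ∪ Set.Ioc (2 : ℝ) 3, κ x = gaussCopula (1 / 2)) ∧
      (∀ x ∈ Set.Ioc (1 : ℝ) 2 ∪ Set.Ioc (3 : ℝ) 4, κ x = gaussCopula (-(1 / 2))) ∧
      -- (i) the two subset-conditional laws of `(X₁, X₂)` coincide …
      ((P.map X)[|{z : ℝ × ℝ × ℝ | z.2.2 ∈ Set.Icc (0 : ℝ) 2}]).map
          (fun z => (z.1, z.2.1)) =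
        ((P.map X)[|{z : ℝ × ℝ × ℝ | z.2.2 ∈ Set.Ioc (2 : ℝ) 4}]).map
          (fun z => (z.1, z.2.1)) ∧
      -- … both being the equal-weight mixture of the two Gaussian copulas …
      ((P.map X)[|{z : ℝ × ℝ × ℝ | z.2.2 ∈ Set.Icc (0 : ℝ) 2}]).map
          (fun z => (z.1, z.2.1)) =
        (1 / 2 : ENNReal) • gaussCopula (1 / 2) + (1 / 2 : ENNReal) • gaussCopula (-(1 / 2)) ∧
      -- … so that in particular the subset-conditional Kendall's taus agree
      sCKT (P.map X) (Set.Icc 0 2) = sCKT (P.map X) (Set.Ioc 2 4) ∧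
      -- (ii) while the pointwise conditional Kendall's tau is not constant
      (∀ x ∈ Set.Icc (0 : ℝ) 1, 0 < ktau2 (κ x)) ∧
      (∀ x ∈ Set.Ioc (1 : ℝ) 2, ktau2 (κ x) < 0) ∧
      ∃ x ∈ Set.Icc (0 : ℝ) 4, ∃ y ∈ Set.Icc (0 : ℝ) 4, ktau2 (κ x) ≠ ktau2 (κ y) := by
  have hP := hasCondKernel_jointLaw (unif 0 4) corrKernel
  have h₀₂ := cond_map_jointLaw_corrKernel measurableSet_Icc measurableSet_Ioc
    (Set.disjoint_left.2 fun x hx hx' => hx'.1.not_ge hx.2) Set.subset_union_left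
    Set.subset_union_left (by norm_num) (by norm_num)
  have h₂₄ := cond_map_jointLaw_corrKernel measurableSet_Ioc measurableSet_Ioc
    (Set.disjoint_left.2 fun x hx hx' => hx'.1.not_ge hx.2) Set.subset_union_right
    Set.subset_union_right (by norm_num) (by norm_num)
  rw [Set.Icc_union_Ioc_eq_Icc zero_le_one one_le_two] at h₀₂
  rw [Set.Ioc_union_Ioc_eq_Ioc (by norm_num) (by norm_num)] at h₂₄
  have hpos : 0 < ktau2 (gaussCopula (1 / 2)) := ktau2_gaussCopula_pos (by norm_num)
  have hneg : ktau2 (gaussCopula (-(1 / 2))) < 0 := ktau2_gaussCopula_neg (by norm_num)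
  refine ⟨_, _, jointLaw (unif 0 4) corrKernel, id, corrKernel, ?_⟩
  simp only [Measure.map_id]
  refine ⟨inferInstance, measurable_id, inferInstance, hP.map_snd_snd, hP,
    fun x hx => corrKernel_of_mem_pos hx, fun x hx => corrKernel_of_mem_neg hx,
    h₀₂.trans h₂₄.symm, h₀₂, ?_, ?_, ?_, ?_⟩
  · rw [sCKT_eq_ktau2_cond, sCKT_eq_ktau2_cond, h₀₂, h₂₄]
  · exact fun x hx => corrKernel_of_mem_pos (Or.inl hx) ▸ hpos
  · exact fun x hx => corrKernel_of_mem_neg (Or.inl hx) ▸ hneg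
  · refine ⟨0, by norm_num, 2, by norm_num, ?_⟩
    rw [corrKernel_of_mem_pos (Or.inl (by norm_num)), corrKernel_of_mem_neg (Or.inl (by norm_num))]
    exact (hneg.trans hpos).ne'
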